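/- The time-successor operator preserves the zone property: if Z ⊆ ℝᵐ is a zone (solution set of difference-bound constraints), then Z' = { v + τ·𝟙 : v ∈ Z, τ ≥ 0, and v_i + τ ≤ b_i for every i } is also definable by a conjunction of constraints of the form x_i ≺ k and x_i − x_j ≺ k (with k possibly rational derived from the b_i and the constraints of Z), and is convex. -/

import Mathlib

inductive ZRel | lt | le | eq | ge | gt
deriving DecidableEq

def ZRel.holds : ZRel → ℝ → ℝ → Prop
  | .lt, a, b => a < b
  | .le, a, b => a ≤ b
  | .eq, a, b => a = b
  | .ge, a, b => a ≥ b
  | .gt, a, b => a > b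

/-- Atomic constraints with integer constants. -/
inductive ZAtom (n : ℕ)
  | single (i : Fin n) (r : ZRel) (k : ℤ)
  | diff (i j : Fin n) (r : ZRel) (k : ℤ)
deriving DecidableEq

def ZAtom.sol {n : ℕ} : ZAtom n → Set (Fin n → ℝ)
  | .single i r k => {x | r.holds (x i) (k : ℝ)}
  | .diff i j r k => {x | r.holds (x i - x j) (k : ℝ)}

def IsZone {n : ℕ} (Z : Set (Fin n → ℝ)) : Prop :=
  ∃ A : Finset (ZAtom n), Z = ⋂ a ∈ A, a.sol

/-- Atomic constraints with rational constants. -/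
inductive QAtom (n : ℕ)
  | single (i : Fin n) (r : ZRel) (k : ℚ)
  | diff (i j : Fin n) (r : ZRel) (k : ℚ)
deriving DecidableEq

def QAtom.sol {n : ℕ} : QAtom n → Set (Fin n → ℝ)
  | .single i r k => {x | r.holds (x i) (k : ℝ)}
  | .diff i j r k => {x | r.holds (x i - x j) (k : ℝ)}

def IsQZone {n : ℕ} (Z : Set (Fin n → ℝ)) : Prop :=
  ∃ A : Finset (QAtom n), Z = ⋂ a ∈ A, a.sol

/-
A valuation `w` lies in the time successor iff `w ≤ b` and some delay `τ ≥ 0` satisfies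
`w - τ𝟙 ∈ Z`. Read as a condition on `τ`, each constraint `x_i ≺ k` of `Z` confines `τ` to a
half-line or point with endpoint `w_i - k`, each constraint `x_i - x_j ≺ k` does not involve `τ`
at all, and `τ ≥ 0` is one more half-line. By Helly's theorem on the line these sets have a
common point iff any two of them meet, and two of them meet iff their endpoints compare in the
right way: a constraint `x_i - x_j ≺ k - k'` or `x_i ≺ k`. This Fourier–Motzkin elimination of
`τ` leaves a conjunction of zone constraints, and such a conjunction is convex.
-/

namespace ZRel

def flip : ZRel → ZRel
  | .lt => .gt | .le => .ge | .eq => .eq | .ge => .le | .gt => .lt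

theorem holds_flip (r : ZRel) (a b : ℝ) : r.flip.holds a b ↔ r.holds b a := by
  cases r <;> simp only [flip, holds, gt_iff_lt, ge_iff_le, eq_comm]

theorem holds_iff_of_sub_eq_sub (r : ZRel) {a b c d : ℝ} (h : a - b = c - d) :
    r.holds a b ↔ r.holds c d := by
  cases r <;> simp only [holds] <;> constructor <;> intro <;> linarith

theorem convex_setOf_holds (r : ZRel) (c : ℝ) : Convex ℝ {t : ℝ | r.holds t c} := by
  cases r
  exacts [convex_Iio c, convex_Iic c, convex_singleton c, convex_Ici c, convex_Ioi c]

theorem exists_holds (r : ZRel) (c : ℝ) : ∃ t, r.holds t c := by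
  cases r
  exacts [⟨c - 1, by simp [holds]⟩, ⟨c, le_rfl⟩, ⟨c, rfl⟩, ⟨c, le_rfl⟩, ⟨c + 1, by simp [holds]⟩]

def meet : ZRel → ZRel → Option ZRel
  | .eq, r => some r
  | r, .eq => some r.flip
  | .lt, .gt | .lt, .ge | .le, .gt => some .gt
  | .le, .ge => some .ge
  | .gt, .lt | .gt, .le | .ge, .lt => some .lt
  | .ge, .le => some .le
  | _, _ => none

theorem exists_holds_and_holds_iff (r r' : ZRel) (a b : ℝ) :
    (∃ t, r.holds t a ∧ r'.holds t b) ↔ ∀ s ∈ r.meet r', s.holds a b := by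
  cases r <;> cases r' <;>
    simp only [meet, flip, holds, Option.mem_def, Option.some.injEq, forall_eq',
      reduceCtorEq, IsEmpty.forall_iff, implies_true, iff_true, gt_iff_lt, ge_iff_le,
      exists_eq_left, exists_eq_right]
  all_goals first
    | exact ⟨min a b - 1, by linarith [min_le_left a b], by linarith [min_le_right a b]⟩
    | exact ⟨max a b + 1, by linarith [le_max_left a b], by linarith [le_max_right a b]⟩
    | exact ⟨fun ⟨t, h₁, h₂⟩ => by linarith, fun h => ⟨(a + b) / 2, by linarith, by linarith⟩⟩

end ZRel

open Finset in
theorem nonempty_biInter_iff_pairwise_of_convex {ι : Type*} {F : ι → Set ℝ} {s : Finset ι}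
    (hF : ∀ i ∈ s, Convex ℝ (F i)) :
    (⋂ i ∈ s, F i).Nonempty ↔ ∀ i ∈ s, ∀ j ∈ s, (F i ∩ F j).Nonempty := by
  classical
  refine ⟨fun ⟨x, hx⟩ i hi j hj => ⟨x, ?_, ?_⟩,
    fun h => Convex.helly_theorem' hF fun I hI hcard => ?_⟩
  · exact Set.mem_iInter₂.1 hx i hi
  · exact Set.mem_iInter₂.1 hx j hj
  rw [Module.finrank_self] at hcard
  obtain h0 | h1 | h2 : #I = 0 ∨ #I = 1 ∨ #I = 2 := by omega
  · simp [Finset.card_eq_zero.1 h0]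
  · obtain ⟨i, rfl⟩ := Finset.card_eq_one.1 h1
    simpa using h i (hI (Finset.mem_singleton_self i)) i (hI (Finset.mem_singleton_self i))
  · obtain ⟨i, j, -, rfl⟩ := Finset.card_eq_two.1 h2
    simpa using h i (hI (by simp)) j (hI (by simp))

section QZone

variable {n : ℕ}

theorem QAtom.convex_sol (a : QAtom n) : Convex ℝ a.sol := by
  cases a with
  | single i r k =>
    exact (r.convex_setOf_holds k).linear_preimage (LinearMap.proj (R := ℝ) (φ := fun _ => ℝ) i)
  | diff i j r k =>
    exact (r.convex_setOf_holds k).linear_preimage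
      (LinearMap.proj (R := ℝ) (φ := fun _ => ℝ) i - LinearMap.proj j)

theorem QAtom.isQZone_sol (a : QAtom n) : IsQZone a.sol := ⟨{a}, by simp⟩

theorem isQZone_univ : IsQZone (Set.univ : Set (Fin n → ℝ)) := ⟨∅, by simp⟩

theorem IsQZone.convex {Z : Set (Fin n → ℝ)} (hZ : IsQZone Z) : Convex ℝ Z := by
  obtain ⟨A, rfl⟩ := hZ
  exact convex_iInter₂ fun a _ => a.convex_sol

theorem IsQZone.inter {Z Z' : Set (Fin n → ℝ)} (hZ : IsQZone Z) (hZ' : IsQZone Z') :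
    IsQZone (Z ∩ Z') := by
  classical
  obtain ⟨A, rfl⟩ := hZ
  obtain ⟨A', rfl⟩ := hZ'
  exact ⟨A ∪ A', Finset.iInf_union.symm⟩

theorem IsQZone.biInter {ι : Type*} (s : Finset ι) {Z : ι → Set (Fin n → ℝ)}
    (hZ : ∀ i ∈ s, IsQZone (Z i)) : IsQZone (⋂ i ∈ s, Z i) := by
  classical
  induction s using Finset.induction_on with
  | empty => simpa using isQZone_univ
  | insert i s _ ih =>
    rw [Finset.set_biInter_insert]
    exact (hZ i (Finset.mem_insert_self i s)).inter
      (ih fun j hj => hZ j (Finset.mem_insert_of_mem hj))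

theorem isQZone_setOf_forall_mem_option (o : Option ZRel) (f : ZRel → QAtom n) :
    IsQZone {w | ∀ s ∈ o, w ∈ (f s).sol} := by
  cases o with
  | none => simpa using isQZone_univ
  | some s => simpa using (f s).isQZone_sol

end QZone

section TimeElapse

variable {m : ℕ}

def timeElapse (Z : Set (Fin m → ℝ)) : Set (Fin m → ℝ) :=
  {w | ∃ τ : ℝ, 0 ≤ τ ∧ (fun i => w i - τ) ∈ Z}

theorem setOf_timeSucc_eq (Z : Set (Fin m → ℝ)) (b : Fin m → ℤ) :
    {w : Fin m → ℝ | ∃ v ∈ Z, ∃ τ : ℝ, 0 ≤ τ ∧ (∀ i, v i + τ ≤ (b i : ℝ)) ∧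
      w = fun i => v i + τ} = timeElapse Z ∩ {w | ∀ i, w i ≤ b i} := by
  ext w
  constructor
  · rintro ⟨v, hv, τ, hτ, hb, rfl⟩
    exact ⟨⟨τ, hτ, by simpa using hv⟩, hb⟩
  · rintro ⟨⟨τ, hτ, hv⟩, hb⟩
    exact ⟨_, hv, τ, hτ, by simpa using hb, by simp⟩

theorem isQZone_setOf_forall_le (b : Fin m → ℚ) : IsQZone {w : Fin m → ℝ | ∀ i, w i ≤ b i} := by
  simpa [Set.ofPred_forall, QAtom.sol, ZRel.holds] using
    IsQZone.biInter Finset.univ fun i _ => (QAtom.single i .le (b i)).isQZone_sol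

/-- The index `none` stands for the constraint `0 ≤ τ`. -/
def delaySet (w : Fin m → ℝ) : Option (ZAtom m) → Set ℝ
  | none => {τ | ZRel.ge.holds τ 0}
  | some (.single i r k) => {τ | r.flip.holds τ (w i - k)}
  | some (.diff i j r k) => {_τ | r.holds (w i - w j) k}

theorem mem_delaySet_some (w : Fin m → ℝ) (a : ZAtom m) (τ : ℝ) :
    τ ∈ delaySet w (some a) ↔ (fun i => w i - τ) ∈ a.sol := by
  cases a with
  | single i r k => exact (r.holds_flip _ _).trans (r.holds_iff_of_sub_eq_sub (by ring))
  | diff i j r k => exact r.holds_iff_of_sub_eq_sub (by ring)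

theorem convex_delaySet (w : Fin m → ℝ) (p : Option (ZAtom m)) : Convex ℝ (delaySet w p) := by
  rcases p with _ | ⟨i, r, k⟩ | ⟨i, j, r, k⟩
  · exact ZRel.ge.convex_setOf_holds 0
  · exact r.flip.convex_setOf_holds _
  · by_cases h : r.holds (w i - w j) k
    · simp [delaySet, h, convex_univ]
    · simp [delaySet, h, convex_empty]

theorem mem_timeElapse_iff {A : Finset (ZAtom m)} {w : Fin m → ℝ} :
    w ∈ timeElapse (⋂ a ∈ A, a.sol) ↔ (⋂ p ∈ A.insertNone, delaySet w p).Nonempty := by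
  simp only [timeElapse, Set.mem_ofPred_eq, Set.mem_iInter₂, Set.Nonempty,
    Finset.forall_mem_insertNone, mem_delaySet_some]
  rfl

theorem isQZone_setOf_delaySet_nonempty (p : Option (ZAtom m)) :
    IsQZone {w | (delaySet w p).Nonempty} := by
  rcases p with _ | ⟨i, r, k⟩ | ⟨i, j, r, k⟩
  · simpa [show ∀ w, (delaySet w none).Nonempty from fun _ => ZRel.ge.exists_holds 0] using
      isQZone_univ
  · simpa [show ∀ w, (delaySet w (some (.single i r k))).Nonempty from
      fun w => r.flip.exists_holds _] using isQZone_univ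
  · exact ⟨{.diff i j r k}, by ext w; simp [delaySet, QAtom.sol, Set.Nonempty]⟩

theorem delaySet_diff_inter_nonempty_iff (w : Fin m → ℝ) (i j : Fin m) (r : ZRel) (k : ℤ)
    (T : Set ℝ) :
    (delaySet w (some (.diff i j r k)) ∩ T).Nonempty ↔
      w ∈ (QAtom.diff i j r k).sol ∧ T.Nonempty := by
  simp [delaySet, QAtom.sol, Set.Nonempty]

theorem isQZone_setOf_delaySet_inter_nonempty (p q : Option (ZAtom m)) :
    IsQZone {w | (delaySet w p ∩ delaySet w q).Nonempty} := by
  match p, q with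
  | some (.diff i j r k), q =>
    simp_rw [delaySet_diff_inter_nonempty_iff]
    exact (QAtom.isQZone_sol _).inter (isQZone_setOf_delaySet_nonempty q)
  | p, some (.diff i j r k) =>
    simp_rw [Set.inter_comm _ (delaySet _ (some (.diff i j r k))),
      delaySet_diff_inter_nonempty_iff]
    exact (QAtom.isQZone_sol _).inter (isQZone_setOf_delaySet_nonempty p)
  | none, none =>
    simpa only [Set.inter_self] using isQZone_setOf_delaySet_nonempty none
  | none, some (.single j r k) =>
    convert isQZone_setOf_forall_mem_option (ZRel.ge.meet r.flip)
      (fun s => QAtom.single j s.flip k) using 1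
    ext w
    exact (ZRel.exists_holds_and_holds_iff .ge r.flip 0 (w j - k)).trans <|
      forall₂_congr fun s _ =>
        (s.holds_iff_of_sub_eq_sub (by push_cast; ring)).trans (s.holds_flip _ _).symm
  | some (.single i r k), none =>
    convert isQZone_setOf_forall_mem_option (r.flip.meet .ge)
      (fun s => QAtom.single i s k) using 1
    ext w
    exact (ZRel.exists_holds_and_holds_iff r.flip .ge (w i - k) 0).trans <|
      forall₂_congr fun s _ => s.holds_iff_of_sub_eq_sub (by push_cast; ring)
  | some (.single i r k), some (.single j r' k') =>
    convert isQZone_setOf_forall_mem_option (r.flip.meet r'.flip)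
      (fun s => QAtom.diff i j s (k - k')) using 1
    ext w
    exact (ZRel.exists_holds_and_holds_iff _ _ _ _).trans <| forall₂_congr fun s _ =>
      s.holds_iff_of_sub_eq_sub (by push_cast; ring)

theorem IsZone.isQZone_timeElapse {Z : Set (Fin m → ℝ)} (hZ : IsZone Z) :
    IsQZone (timeElapse Z) := by
  obtain ⟨A, rfl⟩ := hZ
  have h : timeElapse (⋂ a ∈ A, a.sol) = ⋂ p ∈ A.insertNone, ⋂ q ∈ A.insertNone,
      {w | (delaySet w p ∩ delaySet w q).Nonempty} := by
    ext w
    simp only [mem_timeElapse_iff, Set.mem_iInter₂, Set.mem_ofPred_eq,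
      nonempty_biInter_iff_pairwise_of_convex fun p _ => convex_delaySet w p]
  rw [h]
  exact IsQZone.biInter _ fun p _ => IsQZone.biInter _ fun q _ =>
    isQZone_setOf_delaySet_inter_nonempty p q

end TimeElapse

/-- The time-successor operator preserves the zone property: the bounded
time-successor set of a zone is definable in the constraint language (with
rational constants) and is convex. -/
theorem time_successor_is_zone {m : ℕ} (Z : Set (Fin m → ℝ)) (hZ : IsZone Z)
    (b : Fin m → ℤ) :
    IsQZone {w : Fin m → ℝ | ∃ v ∈ Z, ∃ τ : ℝ, 0 ≤ τ ∧
        (∀ i, v i + τ ≤ (b i : ℝ)) ∧ w = fun i => v i + τ} ∧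
      Convex ℝ {w : Fin m → ℝ | ∃ v ∈ Z, ∃ τ : ℝ, 0 ≤ τ ∧
        (∀ i, v i + τ ≤ (b i : ℝ)) ∧ w = fun i => v i + τ} := by
  have h := hZ.isQZone_timeElapse.inter (isQZone_setOf_forall_le fun i => (b i : ℚ))
  simp only [Rat.cast_intCast] at h
  rw [setOf_timeSucc_eq]
  exact ⟨h, h.convex⟩
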